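/- arXiv:2602.18983 — 4 statements merged into one kernel-verified Lean document; each statement's English description precedes it below -/
import Mathlib

section
/- Let n ≥ 2 and y ∈ ℝⁿ nonzero. The space E²(n) of elastic 2-tensors on ℝⁿ decomposes as an internal direct sum E²(n) = A_y ⊕ B_y ⊕ C_y, where A_y = { K̂_y u : u ∈ ℝⁿ, ⟨u,y⟩ = 0 }, B_y = { Ĥ_y v : v a symmetric 2-tensor }, and C_y = { g ∈ E²(n) : K̂*_y g = 0 and Ĥ*_y g = 0 }. In particular, every f ∈ E²(n) can be written uniquely as f = Ĥ_y v + K̂_y u + g with u ⊥ y, K̂*_y g = 0, Ĥ*_y g = 0. -/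
open scoped BigOperators

/-- Fourier-side operator K̂_y on vectors, producing an elastic 2-tensor. -/
noncomputable def Khat {n : ℕ} (y u : Fin n → ℝ) : Fin n → Fin n → Fin n → Fin n → ℝ :=
  fun i j k l =>
    (1/4) * (y i * u j + y j * u i) * (if k = l then (1:ℝ) else 0) +
    (1/4) * (y k * u l + y l * u k) * (if i = j then (1:ℝ) else 0)

/-- Fourier-side operator Ĥ_y on symmetric 2-tensors, producing an elastic 2-tensor. -/
noncomputable def Hhat {n : ℕ} (y : Fin n → ℝ) (v : Fin n → Fin n → ℝ) :
    Fin n → Fin n → Fin n → Fin n → ℝ :=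
  fun i j k l => (1/2) * (y i * y j * v k l + y k * y l * v i j)

/-- Fourier-side operator K̂*_y on elastic 2-tensors. -/
noncomputable def KhatStar {n : ℕ} (y : Fin n → ℝ) (w : Fin n → Fin n → Fin n → Fin n → ℝ) :
    Fin n → ℝ :=
  fun i => ∑ j, ∑ k, y j * w i j k k

/-- Fourier-side operator Ĥ*_y on elastic 2-tensors. -/
noncomputable def HhatStar {n : ℕ} (y : Fin n → ℝ) (w : Fin n → Fin n → Fin n → Fin n → ℝ) :
    Fin n → Fin n → ℝ :=
  fun i j => ∑ k, ∑ l, y k * y l * w i j k l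

/-- The symmetries of an elastic 2-tensor: symmetric in the first pair, the second
pair, and under swapping the two pairs. -/
def IsElastic2 {n : ℕ} (w : Fin n → Fin n → Fin n → Fin n → ℝ) : Prop :=
  (∀ i j k l, w i j k l = w j i k l) ∧ (∀ i j k l, w i j k l = w i j l k) ∧
  (∀ i j k l, w i j k l = w k l i j)

/-!
Give 4-tensors the inner product `⟨w, w'⟩ = ∑ wᵢⱼₖₗ w'ᵢⱼₖₗ`. For elastic `g` one has
`⟨K̂_y u, g⟩ = ⟨u, K̂*_y g⟩` and `⟨Ĥ_y v, g⟩ = ⟨v, Ĥ*_y g⟩`, so among elastic tensors `C_y` is the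
orthogonal complement of `W = {Ĥ_y v + K̂_y u : v symmetric}`, and every elastic `f` is an element
of `W` plus an element of `C_y`. As `K̂_y y = Ĥ_y 1`, the `K̂`-part can be taken orthogonal to `y`.
For uniqueness, the `C_y`-part of a decomposition of `0` lies in `W`, hence vanishes; and
`Ĥ_y v + K̂_y u = 0` with `u ⊥ y` forces `u = v = 0`: applying `Ĥ*_y` and contracting with `y`
gives `yᵀvy = 0`, `tr v = 0` and `v y = -u/2`, and then `K̂*_y` gives `(n - 1) |y|⁴ u = 0`.
-/

open Finset Matrix

abbrev Tensor4 (n : ℕ) := Fin n → Fin n → Fin n → Fin n → ℝ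

section

variable {n : ℕ}

theorem KhatStar_Khat (y u : Fin n → ℝ) :
    KhatStar y (Khat y u) = (n / 4 : ℝ) • ((y ⬝ᵥ u) • y + (y ⬝ᵥ y) • u) + ((y ⬝ᵥ u) / 2) • y := by
  ext i
  simp only [KhatStar, Khat, dotProduct, Pi.add_apply, Pi.smul_apply, smul_eq_mul, mul_add,
    mul_ite, mul_one, mul_zero, sum_add_distrib, sum_ite_eq, mem_univ, if_true, sum_ite_irrel,
    sum_const_zero, sum_const, card_univ, Fintype.card_fin, nsmul_eq_mul, mul_sum, sum_mul,
    sum_div]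
  simp only [← sum_add_distrib]
  exact sum_congr rfl fun j _ => by ring

-- The `Ĥ*`-formulas are stated for `of (HhatStar …)`, a `Matrix`, so that `*ᵥ`, `trace` and the
-- identity matrix `1` (not the all-ones function) apply.
theorem HhatStar_Khat (y u : Fin n → ℝ) :
    of (HhatStar y (Khat y u)) = ((y ⬝ᵥ y) / 4) • (vecMulVec y u + vecMulVec u y) +
      ((y ⬝ᵥ y) * (y ⬝ᵥ u) / 2) • (1 : Matrix (Fin n) (Fin n) ℝ) := by
  have hswap : ∑ k, ∑ l, y k * y l * (1 / 4 * (y l * u k)) =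
      ∑ k, ∑ l, y k * y l * (1 / 4 * (y k * u l)) := by
    rw [sum_comm]
    exact sum_congr rfl fun _ _ => sum_congr rfl fun _ _ => by ring
  ext i j
  simp only [HhatStar, Khat, dotProduct, vecMulVec, Matrix.add_apply, Matrix.smul_apply,
    Matrix.one_apply, of_apply, smul_eq_mul, mul_add, mul_ite, mul_one, mul_zero,
    sum_add_distrib, sum_ite_eq, mem_univ, if_true, sum_ite_irrel, sum_const_zero]
  congr 1
  · simp only [sum_div, sum_mul, ← sum_add_distrib]
    exact sum_congr rfl fun _ _ => by ring
  · congr 1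
    rw [hswap, sum_mul_sum]
    simp only [sum_div, ← sum_add_distrib]
    exact sum_congr rfl fun _ _ => sum_congr rfl fun _ _ => by ring

theorem KhatStar_Hhat (y : Fin n → ℝ) (v : Matrix (Fin n) (Fin n) ℝ) :
    KhatStar y (Hhat y v) = ((y ⬝ᵥ y) / 2) • (v.trace • y + v *ᵥ y) := by
  ext i
  simp only [KhatStar, Hhat, dotProduct, trace, Matrix.diag, mulVec, Pi.add_apply,
    Pi.smul_apply, smul_eq_mul, mul_add, sum_add_distrib, mul_sum, sum_mul, sum_div]
  congr 1
  · rw [sum_comm]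
    exact sum_congr rfl fun _ _ => sum_congr rfl fun _ _ => by ring
  · exact sum_congr rfl fun _ _ => sum_congr rfl fun _ _ => by ring

theorem HhatStar_Hhat (y : Fin n → ℝ) (v : Matrix (Fin n) (Fin n) ℝ) :
    of (HhatStar y (Hhat y v)) =
      (1 / 2 : ℝ) • ((y ⬝ᵥ v *ᵥ y) • vecMulVec y y + (y ⬝ᵥ y) ^ 2 • v) := by
  ext i j
  simp only [HhatStar, Hhat, dotProduct, mulVec, vecMulVec, Matrix.add_apply, Matrix.smul_apply,
    of_apply, smul_eq_mul, mul_add, sum_add_distrib, mul_sum, sum_mul, sq]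
  congr 1 <;> exact sum_congr rfl fun _ _ => sum_congr rfl fun _ _ => by ring

theorem KhatStar_add (y : Fin n → ℝ) (w w' : Tensor4 n) :
    KhatStar y (w + w') = KhatStar y w + KhatStar y w' := by
  ext i
  simp only [KhatStar, Pi.add_apply, mul_add, sum_add_distrib]

theorem HhatStar_add (y : Fin n → ℝ) (w w' : Tensor4 n) :
    HhatStar y (w + w') = HhatStar y w + HhatStar y w' := by
  ext i j
  simp only [HhatStar, Pi.add_apply, mul_add, sum_add_distrib]

theorem KhatStar_sub (y : Fin n → ℝ) (w w' : Tensor4 n) :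
    KhatStar y (w - w') = KhatStar y w - KhatStar y w' := by
  ext i
  simp only [KhatStar, Pi.sub_apply, mul_sub, sum_sub_distrib]

theorem HhatStar_sub (y : Fin n → ℝ) (w w' : Tensor4 n) :
    HhatStar y (w - w') = HhatStar y w - HhatStar y w' := by
  ext i j
  simp only [HhatStar, Pi.sub_apply, mul_sub, sum_sub_distrib]

theorem KhatStar_zero (y : Fin n → ℝ) : KhatStar y 0 = 0 := by
  ext i
  simp [KhatStar]

theorem HhatStar_zero (y : Fin n → ℝ) : HhatStar y 0 = 0 := by
  ext i j
  simp [HhatStar]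

theorem KhatStar_Hhat_add_Khat {y u : Fin n → ℝ} (hu : u ⬝ᵥ y = 0) (v : Matrix (Fin n) (Fin n) ℝ) :
    KhatStar y (Hhat y v + Khat y u) =
      ((y ⬝ᵥ y) / 2) • (v.trace • y + v *ᵥ y) + ((n : ℝ) / 4) • (y ⬝ᵥ y) • u := by
  rw [KhatStar_add, KhatStar_Hhat, KhatStar_Khat, dotProduct_comm y u, hu]
  simp only [zero_smul, zero_add, zero_div, add_zero]

theorem HhatStar_Hhat_add_Khat {y u : Fin n → ℝ} (hu : u ⬝ᵥ y = 0) (v : Matrix (Fin n) (Fin n) ℝ) :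
    of (HhatStar y (Hhat y v + Khat y u)) =
      (1 / 2 : ℝ) • ((y ⬝ᵥ v *ᵥ y) • vecMulVec y y + (y ⬝ᵥ y) ^ 2 • v) +
        ((y ⬝ᵥ y) / 4) • (vecMulVec y u + vecMulVec u y) := by
  rw [HhatStar_add, ← of_add_of, HhatStar_Hhat, HhatStar_Khat, dotProduct_comm y u, hu]
  simp only [mul_zero, zero_div, zero_smul, add_zero]

theorem eq_zero_of_Hhat_add_Khat_eq_zero (hn : n ≠ 1) {y u : Fin n → ℝ} (hy : y ≠ 0)
    (hu : u ⬝ᵥ y = 0) {v : Matrix (Fin n) (Fin n) ℝ} (h : Hhat y v + Khat y u = 0) :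
    u = 0 ∧ v = 0 := by
  have hu' : y ⬝ᵥ u = 0 := by rwa [dotProduct_comm]
  have hH := HhatStar_Hhat_add_Khat hu v
  have hK := KhatStar_Hhat_add_Khat hu v
  rw [h, HhatStar_zero, of_zero, eq_comm] at hH
  rw [h, KhatStar_zero, eq_comm] at hK
  have hvy := congrArg (· *ᵥ y) hH
  simp only [add_mulVec, smul_mulVec, vecMulVec_mulVec, op_smul_eq_smul, hu, zero_smul, zero_add,
    zero_mulVec] at hvy
  have hQ := congrArg (y ⬝ᵥ ·) hvy
  simp only [dotProduct_add, dotProduct_smul, hu', smul_eq_mul, dotProduct_zero, mul_zero,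
    add_zero] at hQ
  have htr := congrArg trace hH
  simp only [trace_add, trace_smul, trace_vecMulVec, hu, hu', trace_zero, smul_eq_mul, add_zero,
    mul_zero] at htr
  have hs : y ⬝ᵥ y ≠ 0 := dotProduct_self_eq_zero.not.mpr hy
  have hn' : (n : ℝ) - 1 ≠ 0 := sub_ne_zero.mpr (by exact_mod_cast hn)
  generalize y ⬝ᵥ y = s at *
  generalize y ⬝ᵥ v *ᵥ y = Q at *
  have hs2 : s ^ 2 ≠ 0 := pow_ne_zero 2 hs
  have hQ0 : Q = 0 :=
    (mul_eq_zero.mp (by linear_combination hQ : s ^ 2 * Q = 0)).resolve_left hs2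
  have htr0 : v.trace = 0 := (mul_eq_zero.mp
    (by linear_combination 2 * htr - s * hQ0 : s ^ 2 * v.trace = 0)).resolve_left hs2
  have hu0 : u = 0 := by
    ext i
    have hKi := congrFun hK i
    have hvyi := congrFun hvy i
    simp only [Pi.add_apply, Pi.smul_apply, smul_eq_mul, Pi.zero_apply] at hKi hvyi
    have : ((n : ℝ) - 1) * s ^ 2 * u i = 0 := by
      linear_combination 4 * s * hKi - 4 * hvyi + 2 * s * y i * hQ0 - 2 * s ^ 2 * y i * htr0
    exact (mul_eq_zero.mp this).resolve_left (mul_ne_zero hn' hs2)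
  refine ⟨hu0, ?_⟩
  ext i j
  have hHij := congrFun (congrFun hH i) j
  simp only [hQ0, hu0, Matrix.add_apply, Matrix.smul_apply, smul_eq_mul, vecMulVec_apply,
    Pi.zero_apply, Matrix.zero_apply] at hHij
  exact (mul_eq_zero.mp (by linear_combination 2 * hHij : s ^ 2 * v i j = 0)).resolve_left hs2

def tensorInner (n : ℕ) : LinearMap.BilinForm ℝ (Tensor4 n) :=
  LinearMap.mk₂ ℝ (fun w w' => ∑ i, ∑ j, ∑ k, ∑ l, w i j k l * w' i j k l)
    (fun _ _ _ => by simp only [Pi.add_apply, add_mul, sum_add_distrib])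
    (fun _ _ _ => by simp only [Pi.smul_apply, smul_eq_mul, mul_assoc, mul_sum])
    (fun _ _ _ => by simp only [Pi.add_apply, mul_add, sum_add_distrib])
    (fun _ _ _ => by simp only [Pi.smul_apply, smul_eq_mul, mul_left_comm, mul_sum])

theorem tensorInner_apply (w w' : Tensor4 n) :
    tensorInner n w w' = ∑ i, ∑ j, ∑ k, ∑ l, w i j k l * w' i j k l := rfl

theorem tensorInner_isRefl : (tensorInner n).IsRefl := fun w w' h => by
  simpa only [tensorInner_apply, mul_comm] using h

theorem eq_zero_of_tensorInner_self {w : Tensor4 n} (h : tensorInner n w w = 0) : w = 0 := by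
  ext i j k l
  simp only [tensorInner_apply, ← sq] at h
  rw [sum_eq_zero_iff_of_nonneg fun _ _ => by positivity] at h
  have h := h i (mem_univ _)
  rw [sum_eq_zero_iff_of_nonneg fun _ _ => by positivity] at h
  have h := h j (mem_univ _)
  rw [sum_eq_zero_iff_of_nonneg fun _ _ => by positivity] at h
  have h := h k (mem_univ _)
  rw [sum_eq_zero_iff_of_nonneg fun _ _ => by positivity] at h
  exact pow_eq_zero_iff two_ne_zero |>.mp (h l (mem_univ _))

theorem isCompl_orthogonal_tensorInner (W : Submodule ℝ (Tensor4 n)) :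
    IsCompl W ((tensorInner n).orthogonal W) :=
  (LinearMap.BilinForm.isCompl_orthogonal_iff_disjoint tensorInner_isRefl).mpr <|
    Submodule.disjoint_def.mpr fun w hw hw' => eq_zero_of_tensorInner_self (hw' w hw)

theorem sum_comm_pairs {ι κ M : Type*} [Fintype ι] [Fintype κ] [AddCommMonoid M]
    (f : ι → ι → κ → κ → M) :
    ∑ i, ∑ j, ∑ k, ∑ l, f i j k l = ∑ k, ∑ l, ∑ i, ∑ j, f i j k l :=
  calc ∑ i, ∑ j, ∑ k, ∑ l, f i j k l = ∑ i, ∑ k, ∑ j, ∑ l, f i j k l :=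
        sum_congr rfl fun _ _ => sum_comm
    _ = ∑ k, ∑ i, ∑ l, ∑ j, f i j k l :=
        sum_comm.trans (sum_congr rfl fun _ _ => sum_congr rfl fun _ _ => sum_comm)
    _ = ∑ k, ∑ l, ∑ i, ∑ j, f i j k l := sum_congr rfl fun _ _ => sum_comm

theorem tensorInner_Khat {y u : Fin n → ℝ} {g : Tensor4 n} (hg : IsElastic2 g) :
    tensorInner n (Khat y u) g = u ⬝ᵥ KhatStar y g := by
  obtain ⟨h12, -, hswap⟩ := hg
  simp only [tensorInner_apply, Khat, add_mul, mul_ite, mul_one, mul_zero, ite_mul, zero_mul,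
    sum_add_distrib, sum_ite_eq, mem_univ, if_true, sum_ite_irrel, sum_const_zero]
  have hpair : ∑ i, ∑ k, ∑ l, 1 / 4 * (y k * u l + y l * u k) * g i i k l =
      ∑ i, ∑ j, ∑ k, 1 / 4 * (y i * u j + y j * u i) * g i j k k := by
    rw [sum_comm]
    refine sum_congr rfl fun k _ => ?_
    rw [sum_comm]
    exact sum_congr rfl fun l _ => sum_congr rfl fun i _ => by rw [hswap]
  have hflip : ∑ i, ∑ j, ∑ k, y i * u j * g i j k k = u ⬝ᵥ KhatStar y g := by
    simp only [dotProduct, KhatStar, mul_sum]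
    rw [sum_comm]
    exact sum_congr rfl fun j _ => sum_congr rfl fun i _ => sum_congr rfl fun k _ => by
      rw [h12]; ring
  have hhalf : ∑ i, ∑ j, ∑ k, 1 / 4 * (y i * u j + y j * u i) * g i j k k =
      1 / 4 * ∑ i, ∑ j, ∑ k, y i * u j * g i j k k + 1 / 4 * u ⬝ᵥ KhatStar y g := by
    simp only [dotProduct, KhatStar, mul_sum, ← sum_add_distrib]
    exact sum_congr rfl fun _ _ => sum_congr rfl fun _ _ => sum_congr rfl fun _ _ => by ring
  rw [hpair, hhalf, hflip]
  ring

theorem tensorInner_Hhat {y : Fin n → ℝ} {v : Matrix (Fin n) (Fin n) ℝ} {g : Tensor4 n}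
    (hg : ∀ i j k l, g i j k l = g k l i j) :
    tensorInner n (Hhat y v) g = ∑ i, ∑ j, v i j * HhatStar y g i j := by
  have hpair : ∑ i, ∑ j, ∑ k, ∑ l, 1 / 2 * (y i * y j * v k l) * g i j k l =
      ∑ i, ∑ j, ∑ k, ∑ l, 1 / 2 * (y k * y l * v i j) * g i j k l := by
    rw [sum_comm_pairs]
    exact sum_congr rfl fun _ _ => sum_congr rfl fun _ _ => sum_congr rfl fun _ _ =>
      sum_congr rfl fun _ _ => by rw [hg]
  simp only [tensorInner_apply, Hhat, mul_add, add_mul, sum_add_distrib, hpair, ← two_mul]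
  simp only [HhatStar, mul_sum]
  exact sum_congr rfl fun _ _ => sum_congr rfl fun _ _ => sum_congr rfl fun _ _ =>
    sum_congr rfl fun _ _ => by ring

theorem tensorInner_Hhat_add_Khat {y u : Fin n → ℝ} {v : Matrix (Fin n) (Fin n) ℝ}
    {g : Tensor4 n} (hg : IsElastic2 g) :
    tensorInner n (Hhat y v + Khat y u) g =
      ∑ i, ∑ j, v i j * HhatStar y g i j + u ⬝ᵥ KhatStar y g := by
  rw [map_add, LinearMap.add_apply, tensorInner_Hhat hg.2.2, tensorInner_Khat hg]

theorem IsElastic2.sub {w w' : Tensor4 n} (hw : IsElastic2 w) (hw' : IsElastic2 w') :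
    IsElastic2 (w - w') :=
  ⟨fun i j k l => by simp only [Pi.sub_apply, hw.1 i j, hw'.1 i j],
    fun i j k l => by simp only [Pi.sub_apply, hw.2.1 i j k, hw'.2.1 i j k],
    fun i j k l => by simp only [Pi.sub_apply]; rw [hw.2.2, hw'.2.2]⟩

theorem isElastic2_Hhat_add_Khat (y u : Fin n → ℝ) {v : Matrix (Fin n) (Fin n) ℝ}
    (hv : ∀ i j, v i j = v j i) : IsElastic2 (Hhat y v + Khat y u) := by
  refine ⟨fun i j k l => ?_, fun i j k l => ?_, fun i j k l => ?_⟩ <;>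
    simp only [Pi.add_apply, Hhat, Khat, hv i j, hv k l, eq_comm (a := i), eq_comm (a := k)] <;>
    ring

theorem HhatStar_symm {y : Fin n → ℝ} {g : Tensor4 n} (hg : IsElastic2 g) (i j : Fin n) :
    HhatStar y g i j = HhatStar y g j i :=
  sum_congr rfl fun _ _ => sum_congr rfl fun _ _ => by rw [hg.1]

def rangeHhatKhat (y : Fin n → ℝ) : Submodule ℝ (Tensor4 n) where
  carrier := {w | ∃ (u : Fin n → ℝ) (v : Matrix (Fin n) (Fin n) ℝ),
    (∀ i j, v i j = v j i) ∧ Hhat y v + Khat y u = w}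
  add_mem' := by
    rintro _ _ ⟨u, v, hv, rfl⟩ ⟨u', v', hv', rfl⟩
    refine ⟨u + u', v + v', fun i j => by simp only [Matrix.add_apply, hv i j, hv' i j], ?_⟩
    ext
    simp only [Hhat, Khat, Pi.add_apply, Matrix.add_apply]
    ring
  zero_mem' := ⟨0, 0, fun _ _ => rfl, by ext; simp [Hhat, Khat]⟩
  smul_mem' := by
    rintro c _ ⟨u, v, hv, rfl⟩
    refine ⟨c • u, c • v, fun i j => by simp only [Matrix.smul_apply, hv i j], ?_⟩
    ext
    simp only [Hhat, Khat, Pi.add_apply, Pi.smul_apply, Matrix.smul_apply, smul_eq_mul]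
    ring

theorem mem_orthogonal_rangeHhatKhat_iff {y : Fin n → ℝ} {g : Tensor4 n} (hg : IsElastic2 g) :
    g ∈ (tensorInner n).orthogonal (rangeHhatKhat y) ↔ KhatStar y g = 0 ∧ HhatStar y g = 0 := by
  simp only [LinearMap.BilinForm.mem_orthogonal_iff]
  constructor
  · intro h
    have hK := h _ ⟨KhatStar y g, 0, fun _ _ => rfl, rfl⟩
    have hH := h _ ⟨0, of (HhatStar y g), HhatStar_symm hg, rfl⟩
    rw [tensorInner_Hhat_add_Khat hg] at hK hH
    simp only [Matrix.zero_apply, zero_mul, sum_const_zero, zero_add, zero_dotProduct,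
      add_zero, of_apply] at hK hH
    refine ⟨dotProduct_self_eq_zero.mp hK, ?_⟩
    rw [sum_eq_zero_iff_of_nonneg fun _ _ => sum_nonneg fun _ _ => mul_self_nonneg _] at hH
    exact funext fun i => funext fun j =>
      (sum_mul_self_eq_zero_iff _ _).mp (hH i (mem_univ i)) j (mem_univ j)
  · rintro ⟨hK, hH⟩ _ ⟨u, v, -, rfl⟩
    rw [tensorInner_Hhat_add_Khat hg, hK, hH]
    simp

theorem exists_orthogonal_of_mem_rangeHhatKhat {y : Fin n → ℝ} (hy : y ≠ 0) {w : Tensor4 n}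
    (hw : w ∈ rangeHhatKhat y) :
    ∃ (u : Fin n → ℝ) (v : Matrix (Fin n) (Fin n) ℝ),
      u ⬝ᵥ y = 0 ∧ (∀ i j, v i j = v j i) ∧ Hhat y v + Khat y u = w := by
  obtain ⟨u, v, hv, rfl⟩ := hw
  have hs : y ⬝ᵥ y ≠ 0 := dotProduct_self_eq_zero.not.mpr hy
  set c := (u ⬝ᵥ y) / (y ⬝ᵥ y)
  -- `K̂_y y = Ĥ_y 1`
  refine ⟨u - c • y, v + c • 1, ?_, fun i j => ?_, ?_⟩
  · rw [sub_dotProduct, smul_dotProduct, smul_eq_mul, div_mul_cancel₀ _ hs, sub_self]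
  · simp only [Matrix.add_apply, Matrix.smul_apply, Matrix.one_apply, hv i j, eq_comm (a := i)]
  · ext i j k l
    simp only [Hhat, Khat, Pi.add_apply, Pi.sub_apply, Pi.smul_apply, Matrix.add_apply,
      Matrix.smul_apply, Matrix.one_apply, smul_eq_mul]
    ring

theorem exists_decomposition {y : Fin n → ℝ} (hy : y ≠ 0) {f : Tensor4 n} (hf : IsElastic2 f) :
    ∃ (u : Fin n → ℝ) (v : Matrix (Fin n) (Fin n) ℝ) (g : Tensor4 n),
      u ⬝ᵥ y = 0 ∧ (∀ i j, v i j = v j i) ∧ IsElastic2 g ∧ KhatStar y g = 0 ∧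
        HhatStar y g = 0 ∧ f = Hhat y v + Khat y u + g := by
  obtain ⟨w, hw, g, hg, rfl⟩ := Submodule.mem_sup.mp
    ((isCompl_orthogonal_tensorInner (rangeHhatKhat y)).sup_eq_top ▸ Submodule.mem_top (x := f))
  obtain ⟨u, v, hu, hv, rfl⟩ := exists_orthogonal_of_mem_rangeHhatKhat hy hw
  have hg' : IsElastic2 g := by simpa using hf.sub (isElastic2_Hhat_add_Khat y u hv)
  obtain ⟨hKg, hHg⟩ := (mem_orthogonal_rangeHhatKhat_iff hg').mp hg
  exact ⟨u, v, g, hu, hv, hg', hKg, hHg, rfl⟩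

theorem eq_of_Hhat_add_Khat_add_eq (hn : n ≠ 1) {y : Fin n → ℝ} (hy : y ≠ 0)
    {u u' : Fin n → ℝ} {v v' : Matrix (Fin n) (Fin n) ℝ} {g g' : Tensor4 n}
    (hu : u ⬝ᵥ y = 0) (hu' : u' ⬝ᵥ y = 0) (hg : IsElastic2 g) (hg' : IsElastic2 g')
    (hKg : KhatStar y g = 0) (hHg : HhatStar y g = 0)
    (hKg' : KhatStar y g' = 0) (hHg' : HhatStar y g' = 0)
    (h : Hhat y v + Khat y u + g = Hhat y v' + Khat y u' + g') :
    u = u' ∧ v = v' ∧ g = g' := by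
  have hd : Hhat y (v - v') + Khat y (u - u') = g' - g := by
    ext i j k l
    have hijkl := congrFun (congrFun (congrFun (congrFun h i) j) k) l
    simp only [Hhat, Khat, Pi.add_apply, Pi.sub_apply, Matrix.sub_apply] at hijkl ⊢
    linear_combination hijkl
  have hgg : g' - g = 0 := by
    have hself := tensorInner_Hhat_add_Khat (y := y) (u := u - u') (v := v - v') (hg'.sub hg)
    rw [hd, KhatStar_sub, HhatStar_sub, hKg, hKg', hHg, hHg', sub_zero] at hself
    exact eq_zero_of_tensorInner_self (by simpa using hself)
  rw [hgg] at hd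
  obtain ⟨hu0, hv0⟩ :=
    eq_zero_of_Hhat_add_Khat_eq_zero hn hy (by rw [sub_dotProduct, hu, hu', sub_zero]) hd
  exact ⟨sub_eq_zero.mp hu0, sub_eq_zero.mp hv0, (sub_eq_zero.mp hgg).symm⟩

end

/-- the direct sum decomposition E²(n) = A_y ⊕ B_y ⊕ C_y: every elastic
2-tensor f is uniquely f = Ĥ_y v + K̂_y u + g with u ⊥ y, K̂*_y g = Ĥ*_y g = 0. -/
theorem stmt_7 (n : ℕ) (hn : 2 ≤ n) (y : Fin n → ℝ) (hy : y ≠ 0)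
    (f : Fin n → Fin n → Fin n → Fin n → ℝ) (hf : IsElastic2 f) :
    ∃! p : (Fin n → ℝ) × (Fin n → Fin n → ℝ) × (Fin n → Fin n → Fin n → Fin n → ℝ),
      (∑ i, p.1 i * y i = 0) ∧
      (∀ i j, p.2.1 i j = p.2.1 j i) ∧
      IsElastic2 p.2.2 ∧
      KhatStar y p.2.2 = 0 ∧
      HhatStar y p.2.2 = 0 ∧
      (∀ i j k l, f i j k l = Hhat y p.2.1 i j k l + Khat y p.1 i j k l + p.2.2 i j k l) := by
  obtain ⟨u, v, g, hu, hv, hg, hKg, hHg, rfl⟩ := exists_decomposition hy hf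
  refine ⟨(u, v, g), ⟨hu, hv, hg, hKg, hHg, fun _ _ _ _ => rfl⟩, ?_⟩
  rintro ⟨u', v', g'⟩ ⟨hu', -, hg', hKg', hHg', hf'⟩
  obtain ⟨rfl, rfl, rfl⟩ := eq_of_Hhat_add_Khat_add_eq (by omega) hy hu' hu hg' hg hKg' hHg'
    hKg hHg (funext fun i => funext fun j => funext fun k => funext fun l => (hf' i j k l).symm)
  rfl
end

section
/- Let n ≥ 2 and y ∈ ℝⁿ nonzero. Suppose an elastic 2-tensor f satisfies f = Ĥ_y v + K̂_y u with ⟨u, y⟩ = 0. Then the quadruple contraction of f with y determines Σₖₗ yₖyₗ vₖₗ: namely Σᵢⱼₖₗ yᵢyⱼyₖyₗ fᵢⱼₖₗ = |y|⁴ Σₖₗ yₖyₗ vₖₗ. -/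
open scoped BigOperators

/-- if f = Ĥ_y v + K̂_y u with u ⊥ y, then the quadruple contraction of f
with y equals |y|⁴ times the double contraction of v with y. -/
theorem stmt_8 (n : ℕ) (hn : 2 ≤ n) (y : Fin n → ℝ) (hy : y ≠ 0)
    (u : Fin n → ℝ) (hu : ∑ i, u i * y i = 0)
    (v : Fin n → Fin n → ℝ) (hv : ∀ i j, v i j = v j i)
    (f : Fin n → Fin n → Fin n → Fin n → ℝ)
    (hf : ∀ i j k l, f i j k l = Hhat y v i j k l + Khat y u i j k l) :
    ∑ i, ∑ j, ∑ k, ∑ l, y i * y j * y k * y l * f i j k l =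
      (∑ k, y k ^ 2) ^ 2 * ∑ k, ∑ l, y k * y l * v k l := by
  have split : ∀ i j k l, y i * y j * y k * y l * f i j k l =
      (1/2) * (y i ^ 2 * (y j ^ 2 * (y k * y l * v k l)))
      + (1/2) * (y k ^ 2 * (y l ^ 2 * (y i * y j * v i j)))
      + (1/4) * (((y i * u j + y j * u i) * (y i * y j)) * (y k * y l * (if k = l then (1:ℝ) else 0)))
      + (1/4) * ((y i * y j * (if i = j then (1:ℝ) else 0)) * ((y k * u l + y l * u k) * (y k * y l))) := by
    intro i j k l
    simp only [hf, Hhat, Khat]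
    ring
  have hP : ∑ i, ∑ j, (y i * u j + y j * u i) * (y i * y j) = 0 := by
    have h1 : ∀ i : Fin n, ∑ j, (y i * u j + y j * u i) * (y i * y j)
        = y i ^ 2 * (∑ j, u j * y j) + (u i * y i) * ∑ j, y j ^ 2 := by
      intro i
      rw [Finset.mul_sum, Finset.mul_sum, ← Finset.sum_add_distrib]
      exact Finset.sum_congr rfl fun j _ => by ring
    simp only [h1, hu, mul_zero, zero_add]
    rw [← Finset.sum_mul, hu, zero_mul]
  simp only [split, Finset.sum_add_distrib, ← Finset.mul_sum]
  rw [hP]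
  simp only [mul_zero, zero_mul, Finset.sum_const_zero, add_zero]
  simp only [mul_ite, mul_one, mul_zero, Finset.sum_ite_eq, Finset.mem_univ, if_true]
  rw [show (∑ i, ∑ j, (y i * u j + y j * u i) * (y i * y j) * (∑ k, y k * y k))
      = (∑ i, ∑ j, (y i * u j + y j * u i) * (y i * y j)) * (∑ k, y k * y k) by
    simp only [Finset.sum_mul]]
  rw [hP, zero_mul, mul_zero, add_zero]
  simp only [← Finset.sum_mul]
  have h2 : ∀ x x1 : Fin n, (∑ k, y k ^ 2) ^ 2 * y x * y x1 * v x x1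
      = (∑ k, y k ^ 2) ^ 2 * (y x * y x1 * v x x1) := fun x x1 => by ring
  simp only [h2, ← Finset.mul_sum]
  ring
end

section
/- Let n ≥ 2 and y ∈ ℝⁿ nonzero. If an elastic 2-tensor g satisfies K̂*_y g = 0, Ĥ*_y g = 0, and additionally g lies in the image of the map (u, v) ↦ K̂_y u + Ĥ_y v with ⟨u,y⟩ = 0, then g = 0. Equivalently, the subspaces A_y + B_y and C_y of E²(n) intersect trivially. -/
open scoped BigOperators

private lemma diag0 {n : ℕ} (f : Fin n → Fin n → ℝ) :
    ∑ k : Fin n, ∑ l, (if k = l then (1:ℝ) else 0) * f k l = ∑ k, f k k := by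
  simp

private lemma sumconst0 {n : ℕ} (f : Fin n → ℝ) :
    ∑ j, ∑ _k : Fin n, f j = (n:ℝ) * ∑ j, f j := by
  simp [Finset.sum_const, nsmul_eq_mul, ← Finset.mul_sum]

private lemma delta0 {n : ℕ} (i : Fin n) (f : Fin n → ℝ) :
    ∑ j, (if i = j then (1:ℝ) else 0) * f j = f i := by
  simp

/-- the subspaces A_y + B_y and C_y of E²(n) intersect trivially:
an elastic 2-tensor in both must be zero. -/
theorem stmt_9 (n : ℕ) (hn : 2 ≤ n) (y : Fin n → ℝ) (hy : y ≠ 0)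
    (g : Fin n → Fin n → Fin n → Fin n → ℝ)
    (hK : KhatStar y g = 0) (hH : HhatStar y g = 0)
    (u : Fin n → ℝ) (hu : ∑ i, u i * y i = 0)
    (v : Fin n → Fin n → ℝ) (hv : ∀ i j, v i j = v j i)
    (hg : ∀ i j k l, g i j k l = Khat y u i j k l + Hhat y v i j k l) :
    ∀ i j k l, g i j k l = 0 := by
  classical
  have hy' : ∃ i, y i ≠ 0 := by
    by_contra h; push_neg at h; exact hy (funext h)
  obtain ⟨i0, hi0⟩ := hy'
  have hs : (0:ℝ) < ∑ k, y k * y k :=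
    Finset.sum_pos' (fun k _ => mul_self_nonneg _)
      ⟨i0, Finset.mem_univ i0, mul_self_pos.mpr hi0⟩
  have hsne : (∑ k, y k * y k) ≠ 0 := ne_of_gt hs
  have hP : ∑ j, y j * u j = 0 := by
    rw [← hu]; exact Finset.sum_congr rfl fun j _ => mul_comm _ _
  -- the Hhat-star equation
  have star : ∀ i j, (1/4)*(y i * u j + y j * u i) * (∑ k, y k * y k)
      + (1/2)*(y i * y j) * (∑ k, ∑ l, y k * y l * v k l)
      + (1/2)*((∑ k, y k * y k) * (∑ k, y k * y k)) * v i j = 0 := by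
    intro i j
    have h0 := congrFun (congrFun hH i) j
    simp only [HhatStar, Pi.zero_apply] at h0
    have e : ∀ k l : Fin n, y k * y l * g i j k l =
        ((1/4)*(y i * u j + y j * u i)) * ((if k = l then (1:ℝ) else 0) * (y k * y l))
        + ((if i = j then (1:ℝ) else 0) * (1/4)) * ((y k * y k) * (y l * u l))
        + ((if i = j then (1:ℝ) else 0) * (1/4)) * ((y k * u k) * (y l * y l))
        + ((1/2)*(y i * y j)) * (y k * y l * v k l)
        + ((1/2) * v i j) * ((y k * y k) * (y l * y l)) := by
      intro k l; rw [hg]; simp only [Khat, Hhat]; ring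
    rw [Finset.sum_congr rfl (fun k _ => Finset.sum_congr rfl (fun l _ => e k l))] at h0
    simp only [Finset.sum_add_distrib, ← Finset.mul_sum, ← Finset.sum_mul] at h0
    rw [diag0, hP] at h0
    linear_combination h0
  -- Q = yᵀ v y vanishes
  have hQ : (∑ k, ∑ l, y k * y l * v k l) = 0 := by
    have h1 : ∑ i, ∑ j, (y i * y j) *
        ((1/4)*(y i * u j + y j * u i) * (∑ k, y k * y k)
        + (1/2)*(y i * y j) * (∑ k, ∑ l, y k * y l * v k l)
        + (1/2)*((∑ k, y k * y k) * (∑ k, y k * y k)) * v i j) = 0 := by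
      simp only [star, mul_zero, Finset.sum_const_zero]
    have e : ∀ i j : Fin n, (y i * y j) *
        ((1/4)*(y i * u j + y j * u i) * (∑ k, y k * y k)
        + (1/2)*(y i * y j) * (∑ k, ∑ l, y k * y l * v k l)
        + (1/2)*((∑ k, y k * y k) * (∑ k, y k * y k)) * v i j) =
        ((∑ k, y k * y k)*(1/4)) * ((y i * y i) * (y j * u j))
        + ((∑ k, y k * y k)*(1/4)) * ((y i * u i) * (y j * y j))
        + ((1/2)*(∑ k, ∑ l, y k * y l * v k l)) * ((y i * y i) * (y j * y j))
        + ((1/2)*((∑ k, y k * y k) * (∑ k, y k * y k))) * (y i * y j * v i j) := by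
      intro i j; ring
    rw [Finset.sum_congr rfl (fun i _ => Finset.sum_congr rfl (fun j _ => e i j))] at h1
    simp only [Finset.sum_add_distrib, ← Finset.mul_sum, ← Finset.sum_mul] at h1
    rw [hP] at h1
    have h2 : ((∑ k, y k * y k) * (∑ k, y k * y k)) * (∑ k, ∑ l, y k * y l * v k l) = 0 := by
      linear_combination h1
    exact (mul_eq_zero.mp h2).resolve_left (mul_ne_zero hsne hsne)
  -- s * v in terms of u
  have hsv : ∀ i j, (∑ k, y k * y k) * v i j
      + (1/2)*(y i * u j + y j * u i) = 0 := by
    intro i j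
    have st := star i j
    rw [hQ] at st
    have h3 : (∑ k, y k * y k) * ((∑ k, y k * y k) * v i j
        + (1/2)*(y i * u j + y j * u i)) = 0 := by linear_combination 2 * st
    exact (mul_eq_zero.mp h3).resolve_left hsne
  -- trace of v killed by s
  have hsT : (∑ k, y k * y k) * (∑ k, v k k) = 0 := by
    rw [Finset.mul_sum]
    have e : ∀ k : Fin n, (∑ m, y m * y m) * v k k = -(y k * u k) := by
      intro k; have := hsv k k; linarith
    rw [Finset.sum_congr rfl (fun k _ => e k), Finset.sum_neg_distrib, hP, neg_zero]
  -- v contracted with y, killed by s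
  have hsW : ∀ i, (∑ k, y k * y k) * (∑ j, y j * v i j)
      + (1/2)*((∑ k, y k * y k) * u i) = 0 := by
    intro i
    rw [Finset.mul_sum]
    have e : ∀ j : Fin n, (∑ k, y k * y k) * (y j * v i j) =
        (-(1/2)*y i) * (y j * u j) + (-(1/2)*u i) * (y j * y j) := by
      intro j; linear_combination y j * hsv i j
    rw [Finset.sum_congr rfl (fun j _ => e j)]
    simp only [Finset.sum_add_distrib, ← Finset.mul_sum]
    rw [hP]
    ring
  -- u = 0 via the Khat-star equation
  have hu0 : ∀ i, u i = 0 := by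
    intro i
    have h0 := congrFun hK i
    simp only [KhatStar, Pi.zero_apply] at h0
    have e : ∀ j k : Fin n, y j * g i j k k =
        (1/4) * (y i * (y j * u j) + (y j * y j) * u i)
        + (1/2) * (((if i = j then (1:ℝ) else 0) * y j) * (y k * u k))
        + ((1/2) * y i) * ((y j * y j) * (v k k))
        + (1/2) * ((y j * v i j) * (y k * y k)) := by
      intro j k
      rw [hg]; simp only [Khat, Hhat, eq_self_iff_true, if_true]; ring
    rw [Finset.sum_congr rfl (fun j _ => Finset.sum_congr rfl (fun k _ => e j k))] at h0
    simp only [Finset.sum_add_distrib] at h0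
    rw [sumconst0] at h0
    simp only [Finset.sum_add_distrib, ← Finset.mul_sum, ← Finset.sum_mul] at h0
    rw [delta0, hP] at h0
    have hn1 : ((n:ℝ) - 1) ≠ 0 := by
      have h2 : (2:ℝ) ≤ (n:ℝ) := by exact_mod_cast hn
      linarith
    have hui : (((n:ℝ) - 1) * ((∑ k, y k * y k) * (∑ k, y k * y k))) * u i = 0 := by
      linear_combination (4 * (∑ k, y k * y k)) * h0
        - (2 * y i * (∑ k, y k * y k)) * hsT - (2 * (∑ k, y k * y k)) * hsW i
    rcases mul_eq_zero.mp hui with h | h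
    · exact absurd h (mul_ne_zero hn1 (mul_ne_zero hsne hsne))
    · exact h
  -- v = 0
  have hv0 : ∀ i j, v i j = 0 := by
    intro i j
    have h0 := hsv i j
    rw [hu0 i, hu0 j] at h0
    have h1 : (∑ k, y k * y k) * v i j = 0 := by linarith
    exact (mul_eq_zero.mp h1).resolve_left hsne
  intro i j k l
  rw [hg]
  simp [Khat, Hhat, hu0, hv0]
end

section
/- Let f = (fᵢⱼ) be a symmetric 2-tensor field on ℝⁿ with Schwartz components. Define J⁰f(x,ξ) = ∫_ℝ Σᵢⱼ fᵢⱼ(x+tξ)ξⁱξʲ dt and J¹f(x,ξ) = ∫_ℝ t Σᵢⱼ fᵢⱼ(x+tξ)ξⁱξʲ dt for (x,ξ) ∈ ℝⁿ × (ℝⁿ∖{0}). Then for each index j, ∂_{ξⱼ} J⁰f(x,ξ) − ∂_{xⱼ} J¹f(x,ξ) = 2 ∫_ℝ Σᵢ fᵢⱼ(x+tξ) ξⁱ dt. -/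
/-!
A Schwartz function decays like `(1 + |t|)⁻³` along the lines `t ↦ y + t • v`, uniformly for `y`
bounded and `v` bounded away from `0`. This justifies differentiating under the integral sign and
shows that `∂_ξ ∫ fᵢₖ(x + tξ) dt` and `∂_x ∫ t fᵢₖ(x + tξ) dt` are the same functional
`∫ t Dfᵢₖ(x + tξ) dt`. These terms therefore cancel in `∂_ξ J⁰f - ∂_x J¹f`, and only the derivative
of the weight `ξⁱξᵏ` survives; by the symmetry of `f` it gives twice the X-ray transform.
-/

open MeasureTheory SchwartzMap Metric
open scoped Topology

lemma integrable_inv_one_add_abs_sq : Integrable fun t : ℝ => ((1 + |t|) ^ 2)⁻¹ := by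
  refine (integrable_one_add_norm (E := ℝ) (μ := volume) (r := 2) (by norm_num)).congr
    (.of_forall fun t => ?_)
  dsimp only
  rw [Real.norm_eq_abs, Real.rpow_neg (by positivity), ← Real.rpow_natCast (1 + |t|) 2]
  norm_num

lemma one_add_abs_le_mul_one_add_norm {E : Type*} [SeminormedAddCommGroup E] [NormedSpace ℝ E]
    {a c : ℝ} (hc : 0 < c) {y v : E} (hy : ‖y‖ ≤ a) (hv : c ≤ ‖v‖) (t : ℝ) :
    1 + |t| ≤ (min c 1)⁻¹ * (1 + a) * (1 + ‖y + t • v‖) := by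
  have hct : c * |t| ≤ ‖y + t • v‖ + a := calc
    c * |t| ≤ ‖t • v‖ := by rw [norm_smul, Real.norm_eq_abs, mul_comm]; gcongr
    _ = ‖(y + t • v) - y‖ := by rw [add_sub_cancel_left]
    _ ≤ ‖y + t • v‖ + a := (norm_sub_le _ _).trans (by gcongr)
  have hmin : min c 1 * (1 + |t|) ≤ 1 + c * |t| := by
    nlinarith [min_le_left c 1, min_le_right c 1, abs_nonneg t]
  rw [mul_assoc, le_inv_mul_iff₀ (lt_min hc one_pos)]
  nlinarith [norm_nonneg y, norm_nonneg (y + t • v)]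

namespace SchwartzMap

variable {E F : Type*} [NormedAddCommGroup E] [NormedSpace ℝ E]
  [NormedAddCommGroup F] [NormedSpace ℝ F]

lemma exists_one_add_norm_pow_mul_le (g : 𝓢(E, F)) (k : ℕ) :
    ∃ D, ∀ z, (1 + ‖z‖) ^ k * ‖g z‖ ≤ D :=
  ⟨_, fun z => by
    simpa using one_add_le_sup_seminorm_apply (𝕜 := ℝ) (m := (k, 0)) le_rfl le_rfl g z⟩

lemma exists_one_add_abs_mul_norm_comp_line_le (g : 𝓢(E, F)) {a c : ℝ} (hc : 0 < c) :
    ∃ C, ∀ (y v : E) (t : ℝ), ‖y‖ ≤ a → c ≤ ‖v‖ →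
      (1 + |t|) * ‖g (y + t • v)‖ ≤ C * ((1 + |t|) ^ 2)⁻¹ := by
  obtain ⟨D, hD⟩ := g.exists_one_add_norm_pow_mul_le 3
  set K := (min c 1)⁻¹ * (1 + a)
  refine ⟨K ^ 3 * D, fun y v t hy hv => ?_⟩
  have hK : 0 ≤ K :=
    mul_nonneg (inv_nonneg.2 (lt_min hc one_pos).le) (by linarith [norm_nonneg y])
  rw [← div_eq_mul_inv, le_div_iff₀ (by positivity)]
  calc (1 + |t|) * ‖g (y + t • v)‖ * (1 + |t|) ^ 2 = (1 + |t|) ^ 3 * ‖g (y + t • v)‖ := by ring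
    _ ≤ (K * (1 + ‖y + t • v‖)) ^ 3 * ‖g (y + t • v)‖ := by
        gcongr; exact one_add_abs_le_mul_one_add_norm hc hy hv t
    _ = K ^ 3 * ((1 + ‖y + t • v‖) ^ 3 * ‖g (y + t • v)‖) := by ring
    _ ≤ K ^ 3 * D := by gcongr; exact hD _

lemma continuous_comp_line (g : 𝓢(E, F)) (y v : E) : Continuous fun t : ℝ => g (y + t • v) := by
  fun_prop

lemma integrable_comp_line (g : 𝓢(E, F)) (y : E) {v : E} (hv : v ≠ 0) :
    Integrable fun t : ℝ => g (y + t • v) := by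
  obtain ⟨C, hC⟩ := g.exists_one_add_abs_mul_norm_comp_line_le (a := ‖y‖) (norm_pos_iff.2 hv)
  refine (integrable_inv_one_add_abs_sq.const_mul C).mono'
    (g.continuous_comp_line y v).aestronglyMeasurable (.of_forall fun t => ?_)
  exact (le_mul_of_one_le_left (norm_nonneg _) (le_add_of_nonneg_right (abs_nonneg t))).trans
    (hC y v t le_rfl le_rfl)

lemma integrable_smul_comp_line (g : 𝓢(E, F)) (y : E) {v : E} (hv : v ≠ 0) :
    Integrable fun t : ℝ => t • g (y + t • v) := by
  obtain ⟨C, hC⟩ := g.exists_one_add_abs_mul_norm_comp_line_le (a := ‖y‖) (norm_pos_iff.2 hv)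
  refine (integrable_inv_one_add_abs_sq.const_mul C).mono'
    (continuous_id.smul (g.continuous_comp_line y v)).aestronglyMeasurable
    (.of_forall fun t => ?_)
  rw [norm_smul, Real.norm_eq_abs]
  exact (mul_le_mul_of_nonneg_right (le_add_of_nonneg_left zero_le_one) (norm_nonneg _)).trans
    (hC y v t le_rfl le_rfl)

lemma exists_norm_smul_fderiv_comp_line_le (g : 𝓢(E, F)) {a c : ℝ} (hc : 0 < c) :
    ∃ C, ∀ (y v : E) (t : ℝ), ‖y‖ ≤ a → c ≤ ‖v‖ →
      ‖t • fderiv ℝ g (y + t • v)‖ ≤ C * ((1 + |t|) ^ 2)⁻¹ := by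
  obtain ⟨C, hC⟩ := (fderivCLM ℝ E F g).exists_one_add_abs_mul_norm_comp_line_le (a := a) hc
  refine ⟨C, fun y v t hy hv => ?_⟩
  rw [norm_smul, Real.norm_eq_abs, ← fderivCLM_apply ℝ]
  exact (mul_le_mul_of_nonneg_right (le_add_of_nonneg_left zero_le_one) (norm_nonneg _)).trans
    (hC y v t hy hv)

lemma aestronglyMeasurable_smul_fderiv_comp_line (g : 𝓢(E, F)) (y v : E) :
    AEStronglyMeasurable (fun t : ℝ => t • fderiv ℝ g (y + t • v)) := by
  simp_rw [← fderivCLM_apply ℝ]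
  exact (continuous_id.smul ((fderivCLM ℝ E F g).continuous_comp_line y v)).aestronglyMeasurable

lemma hasFDerivAt_integral_comp_line_direction (g : 𝓢(E, F)) (x : E) {ξ : E} (hξ : ξ ≠ 0) :
    HasFDerivAt (fun ξ' : E => ∫ t : ℝ, g (x + t • ξ'))
      (∫ t : ℝ, t • fderiv ℝ g (x + t • ξ)) ξ := by
  have hξ2 : 0 < ‖ξ‖ / 2 := by positivity
  obtain ⟨C, hC⟩ := g.exists_norm_smul_fderiv_comp_line_le (a := ‖x‖) hξ2
  refine hasFDerivAt_integral_of_dominated_of_fderiv_le (ball_mem_nhds ξ hξ2)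
    (.of_forall fun ξ' => (g.continuous_comp_line x ξ').aestronglyMeasurable)
    (g.integrable_comp_line x hξ) (g.aestronglyMeasurable_smul_fderiv_comp_line x ξ)
    (.of_forall fun t ξ' hξ' => hC x ξ' t le_rfl ?_) (integrable_inv_one_add_abs_sq.const_mul C)
    (.of_forall fun t ξ' _ => ?_)
  · rw [mem_ball, dist_eq_norm'] at hξ'
    linarith [norm_sub_norm_le ξ ξ']
  · have := (g.differentiableAt (x := x + t • ξ')).hasFDerivAt.comp ξ'
      (((hasFDerivAt_id ξ').const_smul t).const_add x)
    simpa [Function.comp_def, ContinuousLinearMap.comp_smul] using this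

lemma hasFDerivAt_integral_smul_comp_line_basepoint (g : 𝓢(E, F)) (x : E) {ξ : E}
    (hξ : ξ ≠ 0) :
    HasFDerivAt (fun x' : E => ∫ t : ℝ, t • g (x' + t • ξ))
      (∫ t : ℝ, t • fderiv ℝ g (x + t • ξ)) x := by
  obtain ⟨C, hC⟩ := g.exists_norm_smul_fderiv_comp_line_le (a := ‖x‖ + 1) (norm_pos_iff.2 hξ)
  refine hasFDerivAt_integral_of_dominated_of_fderiv_le (ball_mem_nhds x one_pos)
    (.of_forall fun x' => (continuous_id.smul (g.continuous_comp_line x' ξ)).aestronglyMeasurable)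
    (g.integrable_smul_comp_line x hξ) (g.aestronglyMeasurable_smul_fderiv_comp_line x ξ)
    (.of_forall fun t x' hx' => hC x' ξ t ?_ le_rfl) (integrable_inv_one_add_abs_sq.const_mul C)
    (.of_forall fun t x' _ => ?_)
  · rw [mem_ball, dist_eq_norm] at hx'
    linarith [norm_sub_norm_le x' x]
  · have := ((g.differentiableAt (x := x' + t • ξ)).hasFDerivAt.comp x'
      ((hasFDerivAt_id x').add_const (t • ξ))).const_smul t
    simpa [Function.comp_def, Pi.smul_def] using this

end SchwartzMap

lemma integral_sum_sum_mul_const {α ι : Type*} [MeasurableSpace α] {μ : Measure α} [Fintype ι]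
    {G : ι → ι → α → ℝ} (hG : ∀ i k, Integrable (G i k) μ) (c : ι → ι → ℝ) :
    ∫ a, ∑ i, ∑ k, G i k a * c i k ∂μ = ∑ i, ∑ k, (∫ a, G i k a ∂μ) * c i k := by
  rw [integral_finsetSum _ fun i _ => integrable_finsetSum _ fun k _ => (hG i k).mul_const _]
  refine Finset.sum_congr rfl fun i _ => ?_
  rw [integral_finsetSum _ fun k _ => (hG i k).mul_const _]
  simp_rw [integral_mul_const]

lemma sum_sum_mul_single_add_single_mul {ι R : Type*} [Fintype ι] [DecidableEq ι] [CommSemiring R]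
    {A : ι → ι → R} (hA : ∀ i k, A i k = A k i) (ξ : ι → R) (j : ι) :
    ∑ i, ∑ k, A i k * (ξ i * (Pi.single j 1 : ι → R) k + ξ k * (Pi.single j 1 : ι → R) i) = 2 * ∑ i, A i j * ξ i := by
  simp_rw [mul_add, Finset.sum_add_distrib]
  rw [Finset.sum_comm (f := fun i k => A i k * (ξ k * (Pi.single j 1 : ι → R) i))]
  simp [Pi.single_apply, hA j, two_mul]

/-- for a symmetric Schwartz 2-tensor field f on ℝⁿ,
∂_{ξⱼ} J⁰f − ∂_{xⱼ} J¹f = 2 ∫ Σᵢ fᵢⱼ(x+tξ)ξⁱ dt on ℝⁿ × (ℝⁿ∖{0}). -/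
theorem stmt_15 (n : ℕ)
    (f : Fin n → Fin n → SchwartzMap (EuclideanSpace ℝ (Fin n)) ℝ)
    (hsymm : ∀ i j, f i j = f j i)
    (x ξ : EuclideanSpace ℝ (Fin n)) (hξ : ξ ≠ 0) (j : Fin n) :
    fderiv ℝ (fun ξ' : EuclideanSpace ℝ (Fin n) =>
        ∫ t : ℝ, ∑ i, ∑ k, f i k (x + t • ξ') * ξ' i * ξ' k) ξ
        (EuclideanSpace.single j 1) -
      fderiv ℝ (fun x' : EuclideanSpace ℝ (Fin n) =>
        ∫ t : ℝ, t * ∑ i, ∑ k, f i k (x' + t • ξ) * ξ i * ξ k) x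
        (EuclideanSpace.single j 1) =
    2 * ∫ t : ℝ, ∑ i, f i j (x + t • ξ) * ξ i := by
  set K := fun i k (ξ' : EuclideanSpace ℝ (Fin n)) => ∫ t : ℝ, f i k (x + t • ξ')
  set L := fun i k => ∫ t : ℝ, t • fderiv ℝ (f i k) (x + t • ξ)
  set π := fun i => EuclideanSpace.proj (𝕜 := ℝ) (ι := Fin n) i
  have hJ₀ : HasFDerivAt (fun ξ' : EuclideanSpace ℝ (Fin n) =>
        ∫ t : ℝ, ∑ i, ∑ k, f i k (x + t • ξ') * ξ' i * ξ' k)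
      ((∑ i, ∑ k, K i k ξ • (ξ i • π k + ξ k • π i)) + ∑ i, ∑ k, (ξ i * ξ k) • L i k) ξ := by
    have hsplit : (fun ξ' : EuclideanSpace ℝ (Fin n) =>
          ∫ t : ℝ, ∑ i, ∑ k, f i k (x + t • ξ') * ξ' i * ξ' k)
        =ᶠ[𝓝 ξ] fun ξ' => ∑ i, ∑ k, K i k ξ' * (ξ' i * ξ' k) := by
      filter_upwards [isOpen_ne.mem_nhds hξ] with ξ' hξ'
      simp_rw [mul_assoc]
      exact integral_sum_sum_mul_const (fun i k => (f i k).integrable_comp_line x hξ') _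
    have hterms : HasFDerivAt (fun ξ' => ∑ i, ∑ k, K i k ξ' * (ξ' i * ξ' k))
        (∑ i, ∑ k, (K i k ξ • (ξ i • π k + ξ k • π i) + (ξ i * ξ k) • L i k)) ξ :=
      HasFDerivAt.fun_sum fun i _ => HasFDerivAt.fun_sum fun k _ =>
        ((f i k).hasFDerivAt_integral_comp_line_direction x hξ).mul
          ((π i).hasFDerivAt.mul (π k).hasFDerivAt)
    simpa only [Finset.sum_add_distrib] using hterms.congr_of_eventuallyEq hsplit
  have hJ₁ : HasFDerivAt (fun x' : EuclideanSpace ℝ (Fin n) =>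
        ∫ t : ℝ, t * ∑ i, ∑ k, f i k (x' + t • ξ) * ξ i * ξ k)
      (∑ i, ∑ k, (ξ i * ξ k) • L i k) x := by
    have hsplit : (fun x' : EuclideanSpace ℝ (Fin n) =>
          ∫ t : ℝ, t * ∑ i, ∑ k, f i k (x' + t • ξ) * ξ i * ξ k)
        = fun x' => ∑ i, ∑ k, (∫ t : ℝ, t • f i k (x' + t • ξ)) * (ξ i * ξ k) := by
      funext x'
      rw [← integral_sum_sum_mul_const fun i k => (f i k).integrable_smul_comp_line x' hξ]
      simp only [Finset.mul_sum, smul_eq_mul, mul_assoc]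
    rw [hsplit]
    exact HasFDerivAt.fun_sum fun i _ => HasFDerivAt.fun_sum fun k _ =>
      ((f i k).hasFDerivAt_integral_smul_comp_line_basepoint x hξ).mul_const _
  rw [hJ₀.fderiv, hJ₁.fderiv, add_apply, add_sub_cancel_right,
    integral_finsetSum _ fun i _ => ((f i j).integrable_comp_line x hξ).mul_const _]
  simp_rw [integral_mul_const]
  convert sum_sum_mul_single_add_single_mul (A := fun i k => K i k ξ)
    (fun i k => by simp only [K, hsymm i k]) ξ j using 1
  simp [π, Pi.single_apply, mul_add]
end
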